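/- Let ϱ, a : ℝ³ → ℝ be smooth. Define the graph vector fields (all sums over repeated indices i₂,i₃,j₁,j₂,j₃,k₁,k₂,k₃ ∈ {1,2,3}, free index i ∈ {1,2,3}): Φ₂ⁱ = Σ ε^{i i₂ i₃} ε^{j₁j₂j₃} ε^{k₁k₂k₃} (∂_{i₂}∂_{j₁}∂_{k₁}ϱ)(∂_{k₂}ϱ) ϱ (∂_{i₃}a)(∂_{j₃}a)(∂_{j₂}∂_{k₃}a); Φ₁₈ⁱ = Σ ε^{i i₂ i₃} ε^{j₁j₂j₃} ε^{k₁k₂k₃} (∂_{j₁}∂_{k₁}ϱ)(∂_{i₂}∂_{k₂}ϱ) ϱ (∂_{i₃}a)(∂_{j₃}a)(∂_{j₂}∂_{k₃}a); Φ₃₄ⁱ = Σ ε^{i i₂ i₃} ε^{j₁j₂j₃} ε^{k₁k₂k₃} (∂_{j₁}∂_{k₁}ϱ)(∂_{k₂}ϱ) ϱ (∂_{i₃}a)(∂_{i₂}∂_{j₃}a)(∂_{j₂}∂_{k₃}a); Φ₄₁ⁱ = Σ ε^{i i₂ i₃} ε^{j₁j₂j₃} ε^{k₁k₂k₃} (∂_{j₁}∂_{k₁}ϱ)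 ϱ (∂_{j₂}ϱ)(∂_{i₃}a)(∂_{i₂}∂_{j₃}∂_{k₂}a)(∂_{k₃}a); and the Hamiltonian H₃ = Σ ε^{i₁i₂i₃} ε^{j₁j₂j₃} (∂_{j₁}ϱ)(∂_{i₁}∂_{j₂}ϱ)(∂_{i₂}a)(∂_{i₃}∂_{j₃}a). Then the vector field Y₁ = Φ₂ + Φ₁₈ + Φ₃₄ + Φ₄₁ equals the Hamiltonian vector field of H₃ with respect to the Nambu-determinant bivector: for every i ∈ {1,2,3}, Y₁ⁱ = ϱ Σ_{j,k} ε^{ijk} (∂_j H₃)(∂_k a). In particular [[P, Y₁]] = 0. -/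

import Mathlib

/-- The partial derivative `∂/∂xⁱ` of a function on `ℝ³ ≃ (Fin 3 → ℝ)`. -/
noncomputable def pd (i : Fin 3) (f : (Fin 3 → ℝ) → ℝ) : (Fin 3 → ℝ) → ℝ :=
  fun x => fderiv ℝ f x (Pi.single i 1)

/-- The totally antisymmetric three-index Levi-Civita symbol with `ε⁰¹² = 1`
(indices `1, 2, 3` of the paper are `0, 1, 2` here), via the Vandermonde formula. -/
noncomputable def eps (i j k : Fin 3) : ℝ :=
  (((j : ℝ) - (i : ℝ)) * ((k : ℝ) - (i : ℝ)) * ((k : ℝ) - (j : ℝ))) / 2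

/-- `Φ₂ = φ([0,1,4;1,6,5;1,2,6])`:
`Φ₂ⁱ = Σ ε^{i i₂ i₃} ε^{j₁j₂j₃} ε^{k₁k₂k₃} (∂_{i₂}∂_{j₁}∂_{k₁}ϱ)(∂_{k₂}ϱ) ϱ (∂_{i₃}a)(∂_{j₃}a)(∂_{j₂}∂_{k₃}a)`. -/
noncomputable def Phi2 (ϱ a : (Fin 3 → ℝ) → ℝ) (i : Fin 3) (x : Fin 3 → ℝ) : ℝ :=
  ∑ i₂ : Fin 3, ∑ i₃ : Fin 3, ∑ j₁ : Fin 3, ∑ j₂ : Fin 3, ∑ j₃ : Fin 3,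
    ∑ k₁ : Fin 3, ∑ k₂ : Fin 3, ∑ k₃ : Fin 3,
      eps i i₂ i₃ * eps j₁ j₂ j₃ * eps k₁ k₂ k₃ *
        (pd i₂ (pd j₁ (pd k₁ ϱ)) x * pd k₂ ϱ x * ϱ x *
          pd i₃ a x * pd j₃ a x * pd j₂ (pd k₃ a) x)

/-- `Φ₁₈ = φ([0,2,4;1,6,5;1,2,6])`:
`Φ₁₈ⁱ = Σ ε^{i i₂ i₃} ε^{j₁j₂j₃} ε^{k₁k₂k₃} (∂_{j₁}∂_{k₁}ϱ)(∂_{i₂}∂_{k₂}ϱ) ϱ (∂_{i₃}a)(∂_{j₃}a)(∂_{j₂}∂_{k₃}a)`. -/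
noncomputable def Phi18 (ϱ a : (Fin 3 → ℝ) → ℝ) (i : Fin 3) (x : Fin 3 → ℝ) : ℝ :=
  ∑ i₂ : Fin 3, ∑ i₃ : Fin 3, ∑ j₁ : Fin 3, ∑ j₂ : Fin 3, ∑ j₃ : Fin 3,
    ∑ k₁ : Fin 3, ∑ k₂ : Fin 3, ∑ k₃ : Fin 3,
      eps i i₂ i₃ * eps j₁ j₂ j₃ * eps k₁ k₂ k₃ *
        (pd j₁ (pd k₁ ϱ) x * pd i₂ (pd k₂ ϱ) x * ϱ x *
          pd i₃ a x * pd j₃ a x * pd j₂ (pd k₃ a) x)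

/-- `Φ₃₄ = φ([0,5,4;1,6,5;1,2,6])`:
`Φ₃₄ⁱ = Σ ε^{i i₂ i₃} ε^{j₁j₂j₃} ε^{k₁k₂k₃} (∂_{j₁}∂_{k₁}ϱ)(∂_{k₂}ϱ) ϱ (∂_{i₃}a)(∂_{i₂}∂_{j₃}a)(∂_{j₂}∂_{k₃}a)`. -/
noncomputable def Phi34 (ϱ a : (Fin 3 → ℝ) → ℝ) (i : Fin 3) (x : Fin 3 → ℝ) : ℝ :=
  ∑ i₂ : Fin 3, ∑ i₃ : Fin 3, ∑ j₁ : Fin 3, ∑ j₂ : Fin 3, ∑ j₃ : Fin 3,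
    ∑ k₁ : Fin 3, ∑ k₂ : Fin 3, ∑ k₃ : Fin 3,
      eps i i₂ i₃ * eps j₁ j₂ j₃ * eps k₁ k₂ k₃ *
        (pd j₁ (pd k₁ ϱ) x * pd k₂ ϱ x * ϱ x *
          pd i₃ a x * pd i₂ (pd j₃ a) x * pd j₂ (pd k₃ a) x)

/-- `Φ₄₁ = φ([0,5,4;1,3,5;1,5,6])`:
`Φ₄₁ⁱ = Σ ε^{i i₂ i₃} ε^{j₁j₂j₃} ε^{k₁k₂k₃} (∂_{j₁}∂_{k₁}ϱ) ϱ (∂_{j₂}ϱ)(∂_{i₃}a)(∂_{i₂}∂_{j₃}∂_{k₂}a)(∂_{k₃}a)`. -/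
noncomputable def Phi41 (ϱ a : (Fin 3 → ℝ) → ℝ) (i : Fin 3) (x : Fin 3 → ℝ) : ℝ :=
  ∑ i₂ : Fin 3, ∑ i₃ : Fin 3, ∑ j₁ : Fin 3, ∑ j₂ : Fin 3, ∑ j₃ : Fin 3,
    ∑ k₁ : Fin 3, ∑ k₂ : Fin 3, ∑ k₃ : Fin 3,
      eps i i₂ i₃ * eps j₁ j₂ j₃ * eps k₁ k₂ k₃ *
        (pd j₁ (pd k₁ ϱ) x * ϱ x * pd j₂ ϱ x *
          pd i₃ a x * pd i₂ (pd j₃ (pd k₂ a)) x * pd k₃ a x)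

/-- `H₃ = φ([2,3,4;1,2,4])`, the Hamiltonian
`Σ ε^{i₁i₂i₃} ε^{j₁j₂j₃} (∂_{j₁}ϱ)(∂_{i₁}∂_{j₂}ϱ)(∂_{i₂}a)(∂_{i₃}∂_{j₃}a)`. -/
noncomputable def H₃ (ϱ a : (Fin 3 → ℝ) → ℝ) : (Fin 3 → ℝ) → ℝ := fun x =>
  ∑ i₁ : Fin 3, ∑ i₂ : Fin 3, ∑ i₃ : Fin 3, ∑ j₁ : Fin 3, ∑ j₂ : Fin 3, ∑ j₃ : Fin 3,
    eps i₁ i₂ i₃ * eps j₁ j₂ j₃ *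
      (pd j₁ ϱ x * pd i₁ (pd j₂ ϱ) x * pd i₂ a x * pd i₃ (pd j₃ a) x)


@[fun_prop]
theorem pd_contDiff {f : (Fin 3 → ℝ) → ℝ} (hf : ContDiff ℝ (⊤ : ℕ∞) f) (i : Fin 3) :
    ContDiff ℝ (⊤ : ℕ∞) (pd i f) := by
  unfold pd
  exact (hf.fderiv_right (by simp)).clm_apply contDiff_const

@[fun_prop]
theorem pd_differentiable {f : (Fin 3 → ℝ) → ℝ} (hf : ContDiff ℝ (⊤ : ℕ∞) f) (i : Fin 3) :
    Differentiable ℝ (pd i f) :=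
  (pd_contDiff hf i).differentiable (by simp)

@[fun_prop]
theorem pd_differentiableAt {f : (Fin 3 → ℝ) → ℝ} (hf : ContDiff ℝ (⊤ : ℕ∞) f) (i : Fin 3)
    (x : Fin 3 → ℝ) : DifferentiableAt ℝ (pd i f) x :=
  pd_differentiable hf i x

theorem smooth_diffble {f : (Fin 3 → ℝ) → ℝ} (hf : ContDiff ℝ (⊤ : ℕ∞) f) :
    Differentiable ℝ f := hf.differentiable (by simp)

theorem pd_comm {f : (Fin 3 → ℝ) → ℝ} (hf : ContDiff ℝ (⊤ : ℕ∞) f) (i j : Fin 3) :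
    pd i (pd j f) = pd j (pd i f) := by
  funext x
  have h0 : ContDiff ℝ (⊤ : ℕ∞) (fderiv ℝ f) := hf.fderiv_right (by simp)
  have h1 : DifferentiableAt ℝ (fderiv ℝ f) x := (h0.differentiable (by simp)) x
  have hs : ∀ v w, fderiv ℝ (fderiv ℝ f) x v w = fderiv ℝ (fderiv ℝ f) x w v :=
    second_derivative_symmetric (fun y => ((hf.differentiable (by simp)) y).hasFDerivAt)
      h1.hasFDerivAt
  show fderiv ℝ (fun y => fderiv ℝ f y (Pi.single j 1)) x (Pi.single i 1)
     = fderiv ℝ (fun y => fderiv ℝ f y (Pi.single i 1)) x (Pi.single j 1)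
  rw [fderiv_clm_apply h1 (differentiableAt_const _),
      fderiv_clm_apply h1 (differentiableAt_const _)]
  simp [hs (Pi.single i 1) (Pi.single j 1)]

theorem pd_add {f g : (Fin 3 → ℝ) → ℝ} {x : Fin 3 → ℝ} (hf : DifferentiableAt ℝ f x)
    (hg : DifferentiableAt ℝ g x) (i : Fin 3) :
    pd i (fun y => f y + g y) x = pd i f x + pd i g x := by
  unfold pd; rw [fderiv_fun_add hf hg]; simp

theorem pd_neg {f : (Fin 3 → ℝ) → ℝ} {x : Fin 3 → ℝ} (i : Fin 3) :
    pd i (fun y => -f y) x = -pd i f x := by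
  unfold pd; rw [fderiv_fun_neg]; simp

theorem pd_sub {f g : (Fin 3 → ℝ) → ℝ} {x : Fin 3 → ℝ} (hf : DifferentiableAt ℝ f x)
    (hg : DifferentiableAt ℝ g x) (i : Fin 3) :
    pd i (fun y => f y - g y) x = pd i f x - pd i g x := by
  unfold pd; rw [fderiv_fun_sub hf hg]; simp

theorem pd_mul {f g : (Fin 3 → ℝ) → ℝ} {x : Fin 3 → ℝ} (hf : DifferentiableAt ℝ f x)
    (hg : DifferentiableAt ℝ g x) (i : Fin 3) :
    pd i (fun y => f y * g y) x = pd i f x * g x + f x * pd i g x := by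
  unfold pd; rw [fderiv_fun_mul hf hg]; simp; ring


theorem pd_const (c : ℝ) (i : Fin 3) (x : Fin 3 → ℝ) : pd i (fun _ => c) x = 0 := by
  unfold pd; rw [fderiv_fun_const]; simp

theorem eps_000 : eps 0 0 0 = 0 := by norm_num [eps]
theorem eps_001 : eps 0 0 1 = 0 := by norm_num [eps]
theorem eps_002 : eps 0 0 2 = 0 := by norm_num [eps]
theorem eps_010 : eps 0 1 0 = 0 := by norm_num [eps]
theorem eps_011 : eps 0 1 1 = 0 := by norm_num [eps]
theorem eps_012 : eps 0 1 2 = 1 := by norm_num [eps]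
theorem eps_020 : eps 0 2 0 = 0 := by norm_num [eps]
theorem eps_021 : eps 0 2 1 = (-1) := by norm_num [eps]
theorem eps_022 : eps 0 2 2 = 0 := by norm_num [eps]
theorem eps_100 : eps 1 0 0 = 0 := by norm_num [eps]
theorem eps_101 : eps 1 0 1 = 0 := by norm_num [eps]
theorem eps_102 : eps 1 0 2 = (-1) := by norm_num [eps]
theorem eps_110 : eps 1 1 0 = 0 := by norm_num [eps]
theorem eps_111 : eps 1 1 1 = 0 := by norm_num [eps]
theorem eps_112 : eps 1 1 2 = 0 := by norm_num [eps]
theorem eps_120 : eps 1 2 0 = 1 := by norm_num [eps]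
theorem eps_121 : eps 1 2 1 = 0 := by norm_num [eps]
theorem eps_122 : eps 1 2 2 = 0 := by norm_num [eps]
theorem eps_200 : eps 2 0 0 = 0 := by norm_num [eps]
theorem eps_201 : eps 2 0 1 = 1 := by norm_num [eps]
theorem eps_202 : eps 2 0 2 = 0 := by norm_num [eps]
theorem eps_210 : eps 2 1 0 = (-1) := by norm_num [eps]
theorem eps_211 : eps 2 1 1 = 0 := by norm_num [eps]
theorem eps_212 : eps 2 1 2 = 0 := by norm_num [eps]
theorem eps_220 : eps 2 2 0 = 0 := by norm_num [eps]
theorem eps_221 : eps 2 2 1 = 0 := by norm_num [eps]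
theorem eps_222 : eps 2 2 2 = 0 := by norm_num [eps]

set_option maxHeartbeats 12000000 in
set_option linter.unusedVariables false in
set_option linter.unusedSimpArgs false in
/-- For smooth `ϱ, a : ℝ³ → ℝ`, the vector field `Y₁ = Φ₂ + Φ₁₈ + Φ₃₄ + Φ₄₁` equals the
Hamiltonian vector field of `H₃` with respect to the Nambu-determinant bivector
`P^{ij} = ϱ Σ_k ε^{ijk} ∂_k a`: for every `i`, `Y₁ⁱ = ϱ Σ_{j,k} ε^{ijk} (∂_j H₃)(∂_k a)`.
In particular `[[P, Y₁]] = 0`. -/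
theorem Y1_is_hamiltonian_3d
    (ϱ a : (Fin 3 → ℝ) → ℝ) (hϱ : ContDiff ℝ (⊤ : ℕ∞) ϱ) (ha : ContDiff ℝ (⊤ : ℕ∞) a) :
    ∀ i : Fin 3, ∀ x : Fin 3 → ℝ,
      Phi2 ϱ a i x + Phi18 ϱ a i x + Phi34 ϱ a i x + Phi41 ϱ a i x =
        ϱ x * ∑ j : Fin 3, ∑ k : Fin 3, eps i j k * pd j (H₃ ϱ a) x * pd k a x := by
  intro i x
  have hϱd : Differentiable ℝ ϱ := hϱ.differentiable (by simp)
  have had : Differentiable ℝ a := ha.differentiable (by simp)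
  have hH : H₃ ϱ a = fun y =>
      ∑ i₁ : Fin 3, ∑ i₂ : Fin 3, ∑ i₃ : Fin 3, ∑ j₁ : Fin 3, ∑ j₂ : Fin 3, ∑ j₃ : Fin 3,
        eps i₁ i₂ i₃ * eps j₁ j₂ j₃ *
          (pd j₁ ϱ y * pd i₁ (pd j₂ ϱ) y * pd i₂ a y * pd i₃ (pd j₃ a) y) := by
    funext y; simp only [H₃]
  have hc0 : pd 1 (pd 0 ϱ) = pd 0 (pd 1 ϱ) := pd_comm hϱ 1 0
  have hc1 : pd 2 (pd 0 ϱ) = pd 0 (pd 2 ϱ) := pd_comm hϱ 2 0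
  have hc2 : pd 2 (pd 1 ϱ) = pd 1 (pd 2 ϱ) := pd_comm hϱ 2 1
  have hc3 : pd 1 (pd 0 a) = pd 0 (pd 1 a) := pd_comm ha 1 0
  have hc4 : pd 2 (pd 0 a) = pd 0 (pd 2 a) := pd_comm ha 2 0
  have hc5 : pd 2 (pd 1 a) = pd 1 (pd 2 a) := pd_comm ha 2 1
  have hc6 : pd 1 (pd 0 (pd 0 ϱ)) = pd 0 (pd 1 (pd 0 ϱ)) := pd_comm (pd_contDiff hϱ 0) 1 0
  have hc7 : pd 2 (pd 0 (pd 0 ϱ)) = pd 0 (pd 2 (pd 0 ϱ)) := pd_comm (pd_contDiff hϱ 0) 2 0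
  have hc8 : pd 2 (pd 1 (pd 0 ϱ)) = pd 1 (pd 2 (pd 0 ϱ)) := pd_comm (pd_contDiff hϱ 0) 2 1
  have hc9 : pd 1 (pd 0 (pd 1 ϱ)) = pd 0 (pd 1 (pd 1 ϱ)) := pd_comm (pd_contDiff hϱ 1) 1 0
  have hc10 : pd 2 (pd 0 (pd 1 ϱ)) = pd 0 (pd 2 (pd 1 ϱ)) := pd_comm (pd_contDiff hϱ 1) 2 0
  have hc11 : pd 2 (pd 1 (pd 1 ϱ)) = pd 1 (pd 2 (pd 1 ϱ)) := pd_comm (pd_contDiff hϱ 1) 2 1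
  have hc12 : pd 1 (pd 0 (pd 2 ϱ)) = pd 0 (pd 1 (pd 2 ϱ)) := pd_comm (pd_contDiff hϱ 2) 1 0
  have hc13 : pd 2 (pd 0 (pd 2 ϱ)) = pd 0 (pd 2 (pd 2 ϱ)) := pd_comm (pd_contDiff hϱ 2) 2 0
  have hc14 : pd 2 (pd 1 (pd 2 ϱ)) = pd 1 (pd 2 (pd 2 ϱ)) := pd_comm (pd_contDiff hϱ 2) 2 1
  have hc15 : pd 1 (pd 0 (pd 0 a)) = pd 0 (pd 1 (pd 0 a)) := pd_comm (pd_contDiff ha 0) 1 0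
  have hc16 : pd 2 (pd 0 (pd 0 a)) = pd 0 (pd 2 (pd 0 a)) := pd_comm (pd_contDiff ha 0) 2 0
  have hc17 : pd 2 (pd 1 (pd 0 a)) = pd 1 (pd 2 (pd 0 a)) := pd_comm (pd_contDiff ha 0) 2 1
  have hc18 : pd 1 (pd 0 (pd 1 a)) = pd 0 (pd 1 (pd 1 a)) := pd_comm (pd_contDiff ha 1) 1 0
  have hc19 : pd 2 (pd 0 (pd 1 a)) = pd 0 (pd 2 (pd 1 a)) := pd_comm (pd_contDiff ha 1) 2 0
  have hc20 : pd 2 (pd 1 (pd 1 a)) = pd 1 (pd 2 (pd 1 a)) := pd_comm (pd_contDiff ha 1) 2 1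
  have hc21 : pd 1 (pd 0 (pd 2 a)) = pd 0 (pd 1 (pd 2 a)) := pd_comm (pd_contDiff ha 2) 1 0
  have hc22 : pd 2 (pd 0 (pd 2 a)) = pd 0 (pd 2 (pd 2 a)) := pd_comm (pd_contDiff ha 2) 2 0
  have hc23 : pd 2 (pd 1 (pd 2 a)) = pd 1 (pd 2 (pd 2 a)) := pd_comm (pd_contDiff ha 2) 2 1
  fin_cases i <;>
  · simp (disch := fun_prop) only [Phi2, Phi18, Phi34, Phi41, hH, Fin.sum_univ_three, eps_000, eps_001, eps_002, eps_010, eps_011, eps_012, eps_020, eps_021, eps_022, eps_100, eps_101, eps_102, eps_110, eps_111, eps_112, eps_120, eps_121, eps_122, eps_200, eps_201, eps_202, eps_210, eps_211, eps_212, eps_220, eps_221, eps_222,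
      mul_zero, zero_mul, one_mul, mul_one, neg_mul, mul_neg, neg_neg, add_zero, zero_add,
      neg_zero, pd_add, pd_neg, pd_mul, pd_const]
    simp only [hc0, hc1, hc2, hc3, hc4, hc5, hc6, hc7, hc8, hc9, hc10, hc11, hc12, hc13, hc14, hc15, hc16, hc17, hc18, hc19, hc20, hc21, hc22, hc23]
    ring
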